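/- arXiv:2407.15579 — 4 statements merged into one kernel-verified Lean document; each statement's English description precedes it below -/
import Mathlib

section
/- Let V, W be Orlicz functions, and let (α,β₁), (α,β₂) be in the domain D_φ = {(α,β) : ∫_ℝ e^{αV+βW} dx < ∞} with β₁ < β₂. Then the expectation of V under the Gibbs measure μ_{α,β} (with density e^{αV(x)+βW(x)}/Z_{α,β}) is strictly larger for β₂ than for β₁: E_{μ_{α,β₁}}[V(X)] < E_{μ_{α,β₂}}[V(X)]. -/
/-!
Write `ρ_β = exp (α V + β W)` and `g = exp ((β₂ - β₁) W)`, so that `ρ_{β₂} = g ρ_{β₁}`. Both `V` and `g`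
are strictly increasing functions of `|x|`, hence `(V x - V y) (g x - g y) > 0` whenever `|x| ≠ |y|`.
Integrating this kernel against `ρ_{β₁}(x) ρ_{β₁}(y)` over the plane gives
`2 (Z₁ ∫ V ρ_{β₂} - Z₂ ∫ V ρ_{β₁}) > 0`, which is the claim (Chebyshev's correlation inequality).
-/

open MeasureTheory Set

structure IsOrlicz (V : ℝ → ℝ) : Prop where
  symm : ∀ x, V (-x) = V x
  convexOn : ConvexOn ℝ univ V
  nonneg : ∀ x, 0 ≤ V x
  eq_zero_iff : ∀ x, V x = 0 ↔ x = 0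

namespace IsOrlicz

variable {V : ℝ → ℝ}

theorem apply_abs (hV : IsOrlicz V) (x : ℝ) : V |x| = V x := by
  rcases abs_choice x with h | h <;> rw [h]
  exact hV.symm x

theorem pos_of_ne_zero (hV : IsOrlicz V) {x : ℝ} (hx : x ≠ 0) : 0 < V x :=
  (hV.nonneg x).lt_of_ne fun h => hx ((hV.eq_zero_iff x).1 h.symm)

theorem strictMonoOn_Ici (hV : IsOrlicz V) : StrictMonoOn V (Ici 0) := by
  intro a ha b _ hab
  rcases (mem_Ici.1 ha).eq_or_lt with rfl | ha
  · rw [(hV.eq_zero_iff 0).2 rfl]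
    exact hV.pos_of_ne_zero hab.ne'
  · have hmem : a ∈ openSegment ℝ 0 b := by
      rw [openSegment_eq_Ioo (ha.trans hab)]
      exact ⟨ha, hab⟩
    refine hV.convexOn.lt_right_of_left_lt (mem_univ 0) (mem_univ b) hmem ?_
    rw [(hV.eq_zero_iff 0).2 rfl]
    exact hV.pos_of_ne_zero ha.ne'

theorem lt_iff_abs_lt (hV : IsOrlicz V) (x y : ℝ) : V x < V y ↔ |x| < |y| := by
  rw [← hV.apply_abs x, ← hV.apply_abs y]
  exact hV.strictMonoOn_Ici.lt_iff_lt (abs_nonneg x) (abs_nonneg y)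

end IsOrlicz

section Comonotone

variable {α β : Type*} [LinearOrder β] {f g : α → ℝ} {k : α → β}

theorem sub_mul_sub_pos_of_lt_iff (hf : ∀ x y, f x < f y ↔ k x < k y)
    (hg : ∀ x y, g x < g y ↔ k x < k y) {x y : α} (hxy : k x ≠ k y) :
    0 < (f x - f y) * (g x - g y) := by
  rcases hxy.lt_or_gt with h | h
  · exact mul_pos_of_neg_of_neg (sub_neg.2 ((hf x y).2 h)) (sub_neg.2 ((hg x y).2 h))
  · exact mul_pos (sub_pos.2 ((hf y x).2 h)) (sub_pos.2 ((hg y x).2 h))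

theorem sub_mul_sub_nonneg_of_lt_iff (hf : ∀ x y, f x < f y ↔ k x < k y)
    (hg : ∀ x y, g x < g y ↔ k x < k y) (x y : α) :
    0 ≤ (f x - f y) * (g x - g y) := by
  by_cases hxy : k x = k y
  · have hfxy : f x = f y :=
      le_antisymm (not_lt.1 (by rw [hf, hxy]; exact lt_irrefl _))
        (not_lt.1 (by rw [hf, hxy]; exact lt_irrefl _))
    simp [hfxy]
  · exact (sub_mul_sub_pos_of_lt_iff hf hg hxy).le

end Comonotone

theorem sub_mul_sub_eq_sum_prod {α : Type*} (f ρ σ : α → ℝ) (p : α × α) :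
    (f p.1 - f p.2) * (σ p.1 * ρ p.2 - ρ p.1 * σ p.2) =
      f p.1 * σ p.1 * ρ p.2 - f p.1 * ρ p.1 * σ p.2 - σ p.1 * (f p.2 * ρ p.2)
        + ρ p.1 * (f p.2 * σ p.2) := by
  ring

section CorrelationKernel

variable {α : Type*} [MeasurableSpace α] {μ : Measure α} {f ρ σ : α → ℝ}

theorem integrable_prod_sub_mul_sub (hρ : Integrable ρ μ) (hσ : Integrable σ μ)
    (hfρ : Integrable (fun x => f x * ρ x) μ) (hfσ : Integrable (fun x => f x * σ x) μ) :
    Integrable (fun p : α × α => (f p.1 - f p.2) * (σ p.1 * ρ p.2 - ρ p.1 * σ p.2)) (μ.prod μ) := by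
  simp only [sub_mul_sub_eq_sum_prod]
  exact (((hfσ.mul_prod hρ).sub (hfρ.mul_prod hσ)).sub (hσ.mul_prod hfρ)).add (hρ.mul_prod hfσ)

theorem integral_prod_sub_mul_sub [SFinite μ] (hρ : Integrable ρ μ) (hσ : Integrable σ μ)
    (hfρ : Integrable (fun x => f x * ρ x) μ) (hfσ : Integrable (fun x => f x * σ x) μ) :
    ∫ p, (f p.1 - f p.2) * (σ p.1 * ρ p.2 - ρ p.1 * σ p.2) ∂μ.prod μ =
      2 * ((∫ x, f x * σ x ∂μ) * (∫ x, ρ x ∂μ) - (∫ x, f x * ρ x ∂μ) * ∫ x, σ x ∂μ) := by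
  have h₁ := hfσ.mul_prod hρ
  have h₂ := hfρ.mul_prod hσ
  have h₃ := hσ.mul_prod hfρ
  have h₄ := hρ.mul_prod hfσ
  simp only [sub_mul_sub_eq_sum_prod]
  rw [integral_add _ h₄, integral_sub _ h₃, integral_sub h₁ h₂,
    integral_prod_mul (fun x => f x * σ x) ρ, integral_prod_mul (fun x => f x * ρ x) σ,
    integral_prod_mul σ (fun x => f x * ρ x), integral_prod_mul ρ (fun x => f x * σ x)]
  · ring
  exacts [h₁.sub h₂, (h₁.sub h₂).sub h₃]

end CorrelationKernel

theorem integral_prod_pos_of_abs_lt {K : ℝ × ℝ → ℝ} (hK : Integrable K (volume.prod volume))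
    (hnonneg : ∀ p, 0 ≤ K p) (hpos : ∀ x y, |y| < |x| → 0 < K (x, y)) :
    0 < ∫ p, K p ∂volume.prod volume := by
  rw [integral_pos_iff_support_of_nonneg hnonneg hK]
  have hsub : Ioo (1 : ℝ) 2 ×ˢ Ioo (0 : ℝ) 1 ⊆ Function.support K := by
    rintro ⟨x, y⟩ ⟨⟨hx₁, -⟩, hy₀, hy₁⟩
    refine (hpos x y ?_).ne'
    rw [abs_of_pos hy₀, abs_of_pos (by linarith)]
    linarith
  refine lt_of_lt_of_le ?_ (measure_mono hsub)
  rw [Measure.prod_prod, Real.volume_Ioo, Real.volume_Ioo]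
  norm_num

theorem gibbs_expectation_strictMono_in_beta
    (V W : ℝ → ℝ)
    (hVsym : ∀ x, V (-x) = V x) (hVconv : ConvexOn ℝ Set.univ V)
    (hVnonneg : ∀ x, 0 ≤ V x) (hVzero : ∀ x, V x = 0 ↔ x = 0)
    (hWsym : ∀ x, W (-x) = W x) (hWconv : ConvexOn ℝ Set.univ W)
    (hWnonneg : ∀ x, 0 ≤ W x) (hWzero : ∀ x, W x = 0 ↔ x = 0)
    (α β₁ β₂ : ℝ) (hββ : β₁ < β₂)
    (hZ₁ : Integrable (fun x => Real.exp (α * V x + β₁ * W x)))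
    (hZ₂ : Integrable (fun x => Real.exp (α * V x + β₂ * W x)))
    (hE₁ : Integrable (fun x => V x * Real.exp (α * V x + β₁ * W x)))
    (hE₂ : Integrable (fun x => V x * Real.exp (α * V x + β₂ * W x))) :
    (∫ x, V x * Real.exp (α * V x + β₁ * W x)) /
      (∫ x, Real.exp (α * V x + β₁ * W x)) <
    (∫ x, V x * Real.exp (α * V x + β₂ * W x)) /
      (∫ x, Real.exp (α * V x + β₂ * W x)) := by
  have hV : IsOrlicz V := ⟨hVsym, hVconv, hVnonneg, hVzero⟩
  have hW : IsOrlicz W := ⟨hWsym, hWconv, hWnonneg, hWzero⟩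
  set ρ₁ : ℝ → ℝ := fun x => Real.exp (α * V x + β₁ * W x)
  set ρ₂ : ℝ → ℝ := fun x => Real.exp (α * V x + β₂ * W x)
  set g : ℝ → ℝ := fun x => Real.exp ((β₂ - β₁) * W x)
  have hρ₂ : ∀ x, ρ₂ x = g x * ρ₁ x := fun x => by
    simp only [ρ₁, ρ₂, g, ← Real.exp_add]
    ring_nf
  have hg : ∀ x y, g x < g y ↔ |x| < |y| := fun x y => by
    rw [Real.exp_lt_exp, mul_lt_mul_iff_right₀ (sub_pos.2 hββ), hW.lt_iff_abs_lt]
  have hkernel : ∀ p : ℝ × ℝ, (V p.1 - V p.2) * (ρ₂ p.1 * ρ₁ p.2 - ρ₁ p.1 * ρ₂ p.2) =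
      (V p.1 - V p.2) * (g p.1 - g p.2) * (ρ₁ p.1 * ρ₁ p.2) := fun p => by
    rw [hρ₂, hρ₂]
    ring
  have hpos := integral_prod_pos_of_abs_lt (integrable_prod_sub_mul_sub hZ₁ hZ₂ hE₁ hE₂)
    (fun p => by
      rw [hkernel]
      exact mul_nonneg (sub_mul_sub_nonneg_of_lt_iff hV.lt_iff_abs_lt hg p.1 p.2) (by positivity))
    (fun x y hxy => by
      rw [hkernel]
      exact mul_pos (sub_mul_sub_pos_of_lt_iff hV.lt_iff_abs_lt hg hxy.ne') (by positivity))
  rw [integral_prod_sub_mul_sub hZ₁ hZ₂ hE₁ hE₂] at hpos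
  rw [div_lt_div_iff₀ (integral_exp_pos hZ₁) (integral_exp_pos hZ₂)]
  linarith
end

section
/- Let V, W : ℝ → [0,∞) be two Orlicz functions which are twice continuously differentiable except at countably many points with no accumulation points. For λ ∈ [−1,1], let M_λ ⊆ ℝ be the set of points where x ↦ V(x) + λW(x) changes its curvature (inflection points). Then the closure of M_λ cannot contain a nontrivial interval. -/
open MeasureTheory Filter Real

/-!
The set `S` is closed (it has no accumulation points) and countable, so `U = (a, b) \ S` is a
nonempty open set on which `f = V + λ W` is `C²`. An inflection point cannot sit where `f''` has
a strict sign, so `f'' = 0` at the inflection points in `U`; if these were dense in `U`,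
continuity would give `f'' = 0` on all of `U`, making `f` affine there and leaving no inflection
points in `U` at all.
-/

open Set Topology

def IsInflectionPt (f : ℝ → ℝ) (x : ℝ) : Prop :=
  ∀ δ > 0, ¬ ConvexOn ℝ (Ioo (x - δ) (x + δ)) f ∧ ¬ ConcaveOn ℝ (Ioo (x - δ) (x + δ)) f

section InflectionPoints

variable {f : ℝ → ℝ} {x : ℝ} {U : Set ℝ}

lemma exists_forall_mem_Ioo_of_eventually {p : ℝ → Prop} (h : ∀ᶠ y in 𝓝 x, p y) :
    ∃ δ > 0, ∀ y ∈ Ioo (x - δ) (x + δ), p y := by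
  obtain ⟨δ, hδ, hball⟩ := Metric.eventually_nhds_iff_ball.1 h
  exact ⟨δ, hδ, fun y hy => hball y (by rwa [Real.ball_eq_Ioo])⟩

lemma not_isInflectionPt_of_eventually_deriv2_nonneg
    (hf : ∀ᶠ y in 𝓝 x, DifferentiableAt ℝ f y ∧ DifferentiableAt ℝ (deriv f) y)
    (h : ∀ᶠ y in 𝓝 x, 0 ≤ deriv^[2] f y) : ¬ IsInflectionPt f x := by
  intro hx
  obtain ⟨δ, hδ, hy⟩ := exists_forall_mem_Ioo_of_eventually (hf.and h)
  refine (hx δ hδ).1 (convexOn_of_deriv2_nonneg' (convex_Ioo _ _) ?_ ?_ fun y hy' => (hy y hy').2)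
  · exact fun y hy' => (hy y hy').1.1.differentiableWithinAt
  · exact fun y hy' => (hy y hy').1.2.differentiableWithinAt

lemma not_isInflectionPt_of_eventually_deriv2_nonpos
    (hf : ∀ᶠ y in 𝓝 x, DifferentiableAt ℝ f y ∧ DifferentiableAt ℝ (deriv f) y)
    (h : ∀ᶠ y in 𝓝 x, deriv^[2] f y ≤ 0) : ¬ IsInflectionPt f x := by
  intro hx
  obtain ⟨δ, hδ, hy⟩ := exists_forall_mem_Ioo_of_eventually (hf.and h)
  refine (hx δ hδ).2 (concaveOn_of_deriv2_nonpos' (convex_Ioo _ _) ?_ ?_ fun y hy' => (hy y hy').2)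
  · exact fun y hy' => (hy y hy').1.1.differentiableWithinAt
  · exact fun y hy' => (hy y hy').1.2.differentiableWithinAt

lemma ContDiffOn.eventually_differentiableAt_and_deriv (hf : ContDiffOn ℝ 2 f U)
    (hU : IsOpen U) (hx : x ∈ U) :
    ∀ᶠ y in 𝓝 x, DifferentiableAt ℝ f y ∧ DifferentiableAt ℝ (deriv f) y := by
  have hf' : ContDiffOn ℝ 1 (deriv f) U := hf.deriv_of_isOpen hU (by norm_num)
  filter_upwards [hU.mem_nhds hx] with y hy
  exact ⟨(hf.differentiableOn (by norm_num)).differentiableAt (hU.mem_nhds hy),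
    (hf'.differentiableOn one_ne_zero).differentiableAt (hU.mem_nhds hy)⟩

lemma ContDiffOn.continuousOn_deriv2 (hf : ContDiffOn ℝ 2 f U) (hU : IsOpen U) :
    ContinuousOn (deriv^[2] f) U :=
  (hf.deriv_of_isOpen hU (m := 1) (by norm_num)).continuousOn_deriv_of_isOpen hU le_rfl

lemma IsInflectionPt.deriv2_eq_zero (hx : IsInflectionPt f x) (hf : ContDiffOn ℝ 2 f U)
    (hU : IsOpen U) (hxU : x ∈ U) : deriv^[2] f x = 0 := by
  have hd := hf.eventually_differentiableAt_and_deriv hU hxU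
  have hcont : ContinuousAt (deriv^[2] f) x :=
    (hf.continuousOn_deriv2 hU).continuousAt (hU.mem_nhds hxU)
  by_contra hne
  rcases lt_or_gt_of_ne hne with hneg | hpos
  · exact not_isInflectionPt_of_eventually_deriv2_nonpos hd
      ((hcont.eventually_lt continuousAt_const hneg).mono fun _ => le_of_lt) hx
  · exact not_isInflectionPt_of_eventually_deriv2_nonneg hd
      ((continuousAt_const.eventually_lt hcont hpos).mono fun _ => le_of_lt) hx

lemma not_subset_closure_setOf_isInflectionPt (hf : ContDiffOn ℝ 2 f U) (hU : IsOpen U)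
    (hne : U.Nonempty) : ¬ U ⊆ closure {x | IsInflectionPt f x} := by
  intro hsub
  set M := {x | IsInflectionPt f x}
  have hdense : U ⊆ closure (U ∩ M) := fun x hx => hU.inter_closure ⟨hx, hsub hx⟩
  have hzero : EqOn (deriv^[2] f) 0 U :=
    EqOn.of_subset_closure (fun x hx => hx.2.deriv2_eq_zero hf hU hx.1)
      (hf.continuousOn_deriv2 hU) continuousOn_const inter_subset_left hdense
  obtain ⟨x, hxU, hxM⟩ := mem_closure_iff.1 (hsub hne.some_mem) U hU hne.some_mem
  refine not_isInflectionPt_of_eventually_deriv2_nonneg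
    (hf.eventually_differentiableAt_and_deriv hU hxU) ?_ hxM
  filter_upwards [hU.mem_nhds hxU] with y hy
  rw [hzero hy, Pi.zero_apply]

end InflectionPoints

theorem inflection_points_closure_no_interval_general
    (V W : ℝ → ℝ)
    (S : Set ℝ) (hScount : S.Countable)
    (hSacc : ∀ x : ℝ, ¬ AccPt x (Filter.principal S))
    (hVC2 : ContDiffOn ℝ 2 V Sᶜ) (hWC2 : ContDiffOn ℝ 2 W Sᶜ) :
    ∀ lam ∈ Set.Icc (-1 : ℝ) 1,
      ∀ a b : ℝ, a < b →
        ¬ (Set.Ioo a b ⊆ closure {x : ℝ | ∀ δ > (0 : ℝ),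
            ¬ ConvexOn ℝ (Set.Ioo (x - δ) (x + δ)) (fun y => V y + lam * W y) ∧
            ¬ ConcaveOn ℝ (Set.Ioo (x - δ) (x + δ)) (fun y => V y + lam * W y)}) := by
  intro lam _ a b hab
  have hS : IsClosed S := isClosed_iff_accPt.2 fun x hx => (hSacc x hx).elim
  have hf : ContDiffOn ℝ 2 (fun y => V y + lam * W y) (Ioo a b ∩ Sᶜ) :=
    (hVC2.add (contDiffOn_const.mul hWC2)).mono inter_subset_right
  have hU : (Ioo a b ∩ Sᶜ).Nonempty :=
    (hScount.dense_compl ℝ).inter_open_nonempty _ isOpen_Ioo (nonempty_Ioo.2 hab)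
  exact fun hsub => not_subset_closure_setOf_isInflectionPt hf (isOpen_Ioo.inter hS.isOpen_compl)
    hU (inter_subset_left.trans hsub)

theorem inflection_points_closure_no_interval
    (V W : ℝ → ℝ)
    (hVsym : ∀ x, V (-x) = V x) (hVconv : ConvexOn ℝ Set.univ V)
    (hVnonneg : ∀ x, 0 ≤ V x) (hVzero : ∀ x, V x = 0 ↔ x = 0)
    (hWsym : ∀ x, W (-x) = W x) (hWconv : ConvexOn ℝ Set.univ W)
    (hWnonneg : ∀ x, 0 ≤ W x) (hWzero : ∀ x, W x = 0 ↔ x = 0)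
    (S : Set ℝ) (hScount : S.Countable)
    (hSacc : ∀ x : ℝ, ¬ AccPt x (Filter.principal S))
    (hVC2 : ContDiffOn ℝ 2 V Sᶜ) (hWC2 : ContDiffOn ℝ 2 W Sᶜ) :
    ∀ lam ∈ Set.Icc (-1 : ℝ) 1,
      ∀ a b : ℝ, a < b →
        ¬ (Set.Ioo a b ⊆ closure {x : ℝ | ∀ δ > (0 : ℝ),
            ¬ ConvexOn ℝ (Set.Ioo (x - δ) (x + δ)) (fun y => V y + lam * W y) ∧
            ¬ ConcaveOn ℝ (Set.Ioo (x - δ) (x + δ)) (fun y => V y + lam * W y)}) :=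
  inflection_points_closure_no_interval_general V W S hScount hSacc hVC2 hWC2
end

section
/- Let Σ be a 2×2 positive definite symmetric real matrix with inverse (ρ_{ij}), and let α < 0, β > 0. Then ∫_0^∞ ∫_0^∞ e^{−√n(βx − αy)} g^Σ(x,y) dx dy = 1/(2πn(−α)β|Σ|^{1/2}) + o(n^{−1}) as n → ∞, where g^Σ is the density of the centered bivariate Gaussian with covariance Σ and |Σ| its determinant. -/
/-!
Substituting `(x, y) = (u, v) / √n` turns `n` times the integral into
`∫∫ exp (-(β u - α v)) g ((u, v) / √n) du dv` over the quadrant, where `g` is the (bounded,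
continuous) Gaussian density. By dominated convergence this tends to
`g 0 * ∫∫ exp (-(β u - α v)) = g 0 / (-α β)`, and `g 0 = (2π |Σ|^{1/2})⁻¹`.
-/

open MeasureTheory Filter Real Set Topology

section Tilt

variable {E : Type*} [NormedAddCommGroup E] [NormedSpace ℝ E]

theorem tendsto_integral_smul_comp_smul [CompleteSpace E] {V : Type*} [NormedAddCommGroup V]
    [NormedSpace ℝ V] [MeasurableSpace V] [BorelSpace V] {μ : Measure V} {w : V → ℝ}
    (hw : Integrable w μ) {φ : V → E} {C : ℝ} (hφm : StronglyMeasurable φ) (hφC : ∀ x, ‖φ x‖ ≤ C)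
    (hφ0 : ContinuousAt φ 0) :
    Tendsto (fun r : ℝ => ∫ x, w x • φ (r • x) ∂μ) (𝓝 0) (𝓝 ((∫ x, w x ∂μ) • φ 0)) := by
  rw [← integral_smul_const]
  refine tendsto_integral_filter_of_dominated_convergence (fun x => ‖w x‖ * C)
    (Eventually.of_forall fun r => ?_) (Eventually.of_forall fun r => ?_)
    (hw.norm.mul_const C) (Eventually.of_forall fun x => ?_)
  · exact hw.aestronglyMeasurable.smul
      (hφm.comp_measurable (measurable_const_smul r)).aestronglyMeasurable
  · exact Eventually.of_forall fun x => by
      rw [norm_smul]; exact mul_le_mul_of_nonneg_left (hφC _) (norm_nonneg _)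
  · have hsmul : Tendsto (fun r : ℝ => r • x) (𝓝 0) (𝓝 0) := by
      simpa using (continuous_id.smul continuous_const).tendsto (0 : ℝ) (f := fun r : ℝ => r • x)
    exact (hφ0.tendsto.comp hsmul).const_smul (w x)

theorem integral_Ioi_comp_mul (f : ℝ → E) {r : ℝ} (hr : 0 < r) :
    ∫ x in Ioi 0, f x = r • ∫ u in Ioi 0, f (r * u) := by
  simpa using (integral_comp_mul_left_Ioi' f 0 hr).symm

theorem integral_Ioi_Ioi_comp_mul (f : ℝ → ℝ → E) {r : ℝ} (hr : 0 < r) :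
    ∫ x in Ioi 0, ∫ y in Ioi 0, f x y = r ^ 2 • ∫ u in Ioi 0, ∫ v in Ioi 0, f (r * u) (r * v) := by
  rw [integral_Ioi_comp_mul _ hr]
  simp_rw [fun u => integral_Ioi_comp_mul (f (r * u)) hr, integral_smul, smul_smul, sq]

variable {α β : ℝ}

local notation "μ₊" =>
  Measure.prod (volume.restrict (Ioi (0 : ℝ))) (volume.restrict (Ioi (0 : ℝ)))

theorem exp_neg_sub_eq_mul_exp (x y : ℝ) :
    exp (-(β * x - α * y)) = exp (-β * x) * exp (α * y) := by
  rw [← exp_add]; ring_nf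

theorem integrable_exp_neg_sub_quadrant (hα : α < 0) (hβ : 0 < β) :
    Integrable (fun p : ℝ × ℝ => exp (-(β * p.1 - α * p.2))) μ₊ := by
  simp_rw [exp_neg_sub_eq_mul_exp]
  exact (integrableOn_exp_mul_Ioi (neg_neg_of_pos hβ) 0).mul_prod (integrableOn_exp_mul_Ioi hα 0)

theorem integral_exp_neg_sub_quadrant (hα : α < 0) (hβ : 0 < β) :
    ∫ p, exp (-(β * p.1 - α * p.2)) ∂μ₊ = (-α * β)⁻¹ := by
  simp_rw [exp_neg_sub_eq_mul_exp]
  rw [integral_prod_mul (fun x : ℝ => exp (-β * x)) (fun y : ℝ => exp (α * y)),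
    integral_exp_mul_Ioi (neg_neg_of_pos hβ), integral_exp_mul_Ioi hα]
  field_simp
  simp

theorem tendsto_smul_integral_quadrant_exp_tilt [CompleteSpace E] {φ : ℝ × ℝ → E} {C : ℝ}
    (hφm : StronglyMeasurable φ) (hφC : ∀ p, ‖φ p‖ ≤ C) (hφ0 : ContinuousAt φ 0)
    (hα : α < 0) (hβ : 0 < β) :
    Tendsto (fun t : ℝ => t • ∫ x in Ioi 0, ∫ y in Ioi 0, exp (-√t * (β * x - α * y)) • φ (x, y))
      atTop (𝓝 ((-α * β)⁻¹ • φ 0)) := by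
  have hw := integrable_exp_neg_sub_quadrant hα hβ
  have hlim := (tendsto_integral_smul_comp_smul hw hφm hφC hφ0).comp
    (tendsto_inv_atTop_zero.comp tendsto_sqrt_atTop)
  rw [integral_exp_neg_sub_quadrant hα hβ] at hlim
  refine hlim.congr' ?_
  filter_upwards [eventually_gt_atTop 0] with t ht
  have hs : 0 < √t := sqrt_pos.mpr ht
  have hint : Integrable (fun p : ℝ × ℝ => exp (-(β * p.1 - α * p.2)) • φ ((√t)⁻¹ • p)) μ₊ :=
    hw.smul_bdd C (hφm.comp_measurable (measurable_const_smul _)).aestronglyMeasurable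
      (Eventually.of_forall fun p => hφC _)
  rw [Function.comp_apply, Function.comp_apply, integral_prod _ hint,
    integral_Ioi_Ioi_comp_mul (fun x y => exp (-√t * (β * x - α * y)) • φ (x, y))
      (inv_pos.mpr hs), smul_smul, inv_pow, sq_sqrt ht.le, mul_inv_cancel₀ ht.ne', one_smul]
  congr! 4 with u v
  rw [Prod.smul_mk, smul_eq_mul, smul_eq_mul]
  congr 2
  field_simp

end Tilt

theorem Matrix.PosSemidef.quadForm_fin_two_nonneg {M : Matrix (Fin 2) (Fin 2) ℝ}
    (hM : M.PosSemidef) (x y : ℝ) : 0 ≤ M 0 0 * x ^ 2 + 2 * M 0 1 * x * y + M 1 1 * y ^ 2 := by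
  have h := hM.dotProduct_mulVec_nonneg ![x, y]
  have hsymm : M 1 0 = M 0 1 := by simpa using hM.1.apply 0 1
  simp only [dotProduct, Matrix.mulVec, Fin.sum_univ_two] at h
  simp only [Matrix.cons_val_zero, Matrix.cons_val_one, hsymm, star_trivial] at h
  nlinarith [h]

theorem gaussian_quadrant_exponential_tilt_asymptotics
    (Sig : Matrix (Fin 2) (Fin 2) ℝ) (hSig : Sig.PosDef)
    (α β : ℝ) (hα : α < 0) (hβ : 0 < β) :
    Filter.Tendsto
      (fun n : ℕ => (n : ℝ) *
        ((∫ x in Set.Ioi (0 : ℝ), ∫ y in Set.Ioi (0 : ℝ),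
            Real.exp (-Real.sqrt n * (β * x - α * y)) *
              ((2 * π * Real.sqrt Sig.det)⁻¹ *
                Real.exp (-(Sig⁻¹ 0 0 * x ^ 2 + 2 * Sig⁻¹ 0 1 * x * y +
                    Sig⁻¹ 1 1 * y ^ 2) / 2))) -
          1 / (2 * π * n * (-α) * β * Real.sqrt Sig.det)))
      Filter.atTop (nhds 0) := by
  set c := (2 * π * √Sig.det)⁻¹
  set g : ℝ × ℝ → ℝ := fun p => c * exp (-(Sig⁻¹ 0 0 * p.1 ^ 2 + 2 * Sig⁻¹ 0 1 * p.1 * p.2 +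
    Sig⁻¹ 1 1 * p.2 ^ 2) / 2)
  have hd : 0 < √Sig.det := sqrt_pos.mpr hSig.det_pos
  have hc : 0 < c := by positivity
  have hg : Continuous g := by fun_prop
  have hgc : ∀ p, ‖g p‖ ≤ c := fun p => by
    have := hSig.inv.posSemidef.quadForm_fin_two_nonneg p.1 p.2
    rw [norm_of_nonneg (by positivity)]
    exact mul_le_of_le_one_right hc.le (exp_le_one_iff.mpr (by linarith))
  have hlim := ((tendsto_smul_integral_quadrant_exp_tilt hg.stronglyMeasurable hgc
    hg.continuousAt hα hβ).comp tendsto_natCast_atTop_atTop).sub_const ((-α * β)⁻¹ * c)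
  have hg0 : g 0 = c := by simp [g]
  rw [hg0, smul_eq_mul, sub_self] at hlim
  refine hlim.congr' ?_
  filter_upwards [eventually_gt_atTop 0] with n hn
  have : (n : ℝ) ≠ 0 := by positivity
  simp only [Function.comp_apply, smul_eq_mul, g, mul_sub]
  congr 1
  simp only [c]
  field_simp
end

section
/- Let Σ be a 2×2 positive definite symmetric matrix with inverse entries ρ_{ij}. Then uniformly in t ∈ ℝ, as n → ∞: ∫_0^∞ ∫_{−∞}^t e^{−x} exp(−(x/√n, y) Σ^{−1} (x/√n, y)^T) dy dx = ∫_{−∞}^t e^{−y² ρ_{22}/2} dy + O(n^{−1/2}), where the implicit constant is independent of t. -/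
/-!
Write `q(u, v) = a u²/2 + b u v + c v²/2` for the quadratic form of `Σ⁻¹` (up to the factor `1/2`),
so the integrand is `e^{-x} e^{-q(x/√n, y)}` and the Gaussian term is `e^{-q(0, y)}`, which equals
`∫₀^∞ e^{-x} e^{-q(0, y)} dx`. Positive definiteness gives `q(u, v) ≥ κ v²` with `κ = det/(2a) > 0`,
so both exponentials are at most `e^{-κ y²}`, and the bound `|e^s - e^t| ≤ |s - t| (e^s + e^t)` controls
the difference of the two integrands by `e^{-x} (|a| x² + 2|b| x |y|) e^{-κ y²} / √n`. This majorant is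
integrable on `(0, ∞) × ℝ` and does not depend on `t`, so its integral is the constant `C`.
-/

open MeasureTheory Real Set

lemma Real.abs_exp_sub_exp_le (s t : ℝ) : |exp s - exp t| ≤ |s - t| * (exp s + exp t) := by
  have tangent (x y : ℝ) : exp x - exp y ≤ (x - y) * exp x := by
    have h := mul_le_mul_of_nonneg_right (add_one_le_exp (y - x)) (exp_pos x).le
    rw [← exp_add, sub_add_cancel] at h
    linarith
  have hst := tangent s t
  have hts := tangent t s
  rw [abs_le]
  constructor <;> cases abs_cases (s - t) <;> nlinarith [exp_pos s, exp_pos t]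

lemma discr_mul_sq_le_quadratic {a : ℝ} (b c : ℝ) (ha : 0 < a) (u v : ℝ) :
    (a * c - b ^ 2) / (2 * a) * v ^ 2 ≤ a * u ^ 2 / 2 + b * u * v + c * v ^ 2 / 2 := by
  rw [div_mul_eq_mul_div, div_le_iff₀ (by positivity)]
  nlinarith [sq_nonneg (a * u + b * v)]

lemma MeasureTheory.IntegrableOn.mul_prod {α β L : Type*} [MeasurableSpace α] [MeasurableSpace β]
    {μ : Measure α} {ν : Measure β} [SFinite μ] [SFinite ν] [NormedRing L] {f : α → L} {g : β → L}
    {s : Set α} {t : Set β} (hf : IntegrableOn f s μ) (hg : IntegrableOn g t ν) :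
    IntegrableOn (fun z : α × β => f z.1 * g z.2) (s ×ˢ t) (μ.prod ν) := by
  rw [IntegrableOn, ← Measure.prod_restrict]
  exact Integrable.mul_prod hf hg

lemma integrableOn_exp_neg_mul_pow_Ioi (k : ℕ) :
    IntegrableOn (fun x : ℝ => exp (-x) * x ^ k) (Ioi 0) := by
  simpa [← rpow_natCast] using GammaIntegral_convergent (s := k + 1) (by positivity)

lemma integrable_abs_mul_exp_neg_mul_sq {κ : ℝ} (hκ : 0 < κ) :
    Integrable fun y : ℝ => |y| * exp (-κ * y ^ 2) := by
  simpa [abs_mul] using (integrable_mul_exp_neg_mul_sq hκ).abs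

lemma integrableOn_Ioi_prod_of_abs_le_exp_neg_mul_gaussian {κ : ℝ} (hκ : 0 < κ)
    {f : ℝ × ℝ → ℝ} (hf : Continuous f)
    (hle : ∀ p : ℝ × ℝ, |f p| ≤ exp (-p.1) * exp (-κ * p.2 ^ 2)) (T : Set ℝ) :
    IntegrableOn f (Ioi 0 ×ˢ T) := by
  have hexp : IntegrableOn (fun x : ℝ => exp (-x)) (Ioi 0) := by
    simpa using integrableOn_exp_neg_mul_pow_Ioi 0
  have hdom := hexp.mul_prod (integrable_exp_neg_mul_sq hκ).integrableOn (t := T)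
  exact hdom.mono' hf.aestronglyMeasurable (.of_forall hle)

lemma integrableOn_tilt_majorant {κ : ℝ} (hκ : 0 < κ) (a b : ℝ) :
    IntegrableOn (fun p : ℝ × ℝ =>
      exp (-p.1) * (|a| * p.1 ^ 2 + 2 * |b| * p.1 * |p.2|) * exp (-κ * p.2 ^ 2)) (Ioi 0 ×ˢ univ) := by
  have hsq := (integrableOn_exp_neg_mul_pow_Ioi 2).mul_prod
    (integrable_exp_neg_mul_sq hκ).integrableOn (t := univ)
  have hlin := (integrableOn_exp_neg_mul_pow_Ioi 1).mul_prod
    (integrable_abs_mul_exp_neg_mul_sq hκ).integrableOn (t := univ)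
  refine ((hsq.const_mul |a|).add (hlin.const_mul (2 * |b|))).congr (.of_forall fun p => ?_)
  simp only [Pi.add_apply, pow_one]
  ring

section TiltedGaussian

variable {a b c κ : ℝ}

lemma abs_tilt_exponent_sub_le {n : ℕ} (hn : 1 ≤ n) {x : ℝ} (hx : 0 ≤ x) (y : ℝ) :
    |(a * x ^ 2 / (2 * n) + b * x * y / √n + c * y ^ 2 / 2) - c * y ^ 2 / 2| ≤
      (|a| * x ^ 2 / 2 + |b| * x * |y|) / √n := by
  have hn' : (1 : ℝ) ≤ n := by exact_mod_cast hn
  have hs : 0 < √(n : ℝ) := by positivity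
  have hsn : √(n : ℝ) ≤ n := by
    nlinarith [sq_sqrt (show (0 : ℝ) ≤ n by positivity), one_le_sqrt.mpr hn']
  have hquad : |a * x ^ 2 / (2 * n)| ≤ |a| * x ^ 2 / 2 / √n := by
    rw [abs_div, abs_mul, abs_of_nonneg (sq_nonneg x), abs_of_pos (by positivity : (0 : ℝ) < 2 * n),
      div_div]
    exact div_le_div_of_nonneg_left (by positivity) (by positivity) (by linarith)
  have hcross : |b * x * y / √n| = |b| * x * |y| / √n := by
    rw [abs_div, abs_mul, abs_mul, abs_of_nonneg hx, abs_of_pos hs]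
  calc _ = |a * x ^ 2 / (2 * n) + b * x * y / √n| := by ring_nf
    _ ≤ |a| * x ^ 2 / 2 / √n + |b| * x * |y| / √n := (abs_add_le _ _).trans (by linarith)
    _ = _ := by ring

variable (hq : ∀ u v : ℝ, κ * v ^ 2 ≤ a * u ^ 2 / 2 + b * u * v + c * v ^ 2 / 2)
include hq

lemma mul_sq_le_tilt_exponent {n : ℕ} (hn : 1 ≤ n) (x y : ℝ) :
    κ * y ^ 2 ≤ a * x ^ 2 / (2 * n) + b * x * y / √n + c * y ^ 2 / 2 := by
  have hs : 0 < √(n : ℝ) := sqrt_pos.mpr (by exact_mod_cast hn)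
  convert hq (x / √n) y using 1
  rw [div_pow, sq_sqrt (by positivity)]
  field_simp

lemma abs_tilted_sub_gaussian_le {n : ℕ} (hn : 1 ≤ n) {x : ℝ} (hx : 0 ≤ x) (y : ℝ) :
    |exp (-x) * exp (-(a * x ^ 2 / (2 * n) + b * x * y / √n + c * y ^ 2 / 2)) -
        exp (-x) * exp (-c * y ^ 2 / 2)| ≤
      exp (-x) * (|a| * x ^ 2 + 2 * |b| * x * |y|) * exp (-κ * y ^ 2) / √n := by
  have hQκ := mul_sq_le_tilt_exponent hq hn x y
  have hQc := abs_tilt_exponent_sub_le (a := a) (b := b) (c := c) hn hx y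
  set Q := a * x ^ 2 / (2 * n) + b * x * y / √n + c * y ^ 2 / 2
  have hsum : exp (-Q) + exp (-(c * y ^ 2 / 2)) ≤ 2 * exp (-κ * y ^ 2) := by
    have hQ : exp (-Q) ≤ exp (-κ * y ^ 2) := exp_le_exp.mpr (by linarith)
    have hc : exp (-(c * y ^ 2 / 2)) ≤ exp (-κ * y ^ 2) := exp_le_exp.mpr (by linarith [hq 0 y])
    linarith
  have hexp : |exp (-Q) - exp (-(c * y ^ 2 / 2))| ≤
      (|a| * x ^ 2 / 2 + |b| * x * |y|) / √n * (2 * exp (-κ * y ^ 2)) := by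
    refine (abs_exp_sub_exp_le _ _).trans (mul_le_mul ?_ hsum (by positivity) (by positivity))
    rwa [neg_sub_neg, abs_sub_comm]
  rw [← mul_sub, abs_mul, abs_of_pos (exp_pos _), neg_mul, neg_div]
  calc _ ≤ exp (-x) * ((|a| * x ^ 2 / 2 + |b| * x * |y|) / √n * (2 * exp (-κ * y ^ 2))) :=
        mul_le_mul_of_nonneg_left hexp (exp_pos _).le
    _ = _ := by ring

theorem exists_abs_tilted_integral_sub_gaussian_le (hκ : 0 < κ) :
    ∃ C : ℝ, ∀ n : ℕ, 1 ≤ n → ∀ t : ℝ,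
      |(∫ x in Ioi (0 : ℝ), ∫ y in Iio t,
          exp (-x) * exp (-(a * x ^ 2 / (2 * n) + b * x * y / √n + c * y ^ 2 / 2))) -
        ∫ y in Iio t, exp (-c * y ^ 2 / 2)| ≤ C / √n := by
  set H : ℝ × ℝ → ℝ := fun p =>
    exp (-p.1) * (|a| * p.1 ^ 2 + 2 * |b| * p.1 * |p.2|) * exp (-κ * p.2 ^ 2)
  have hH : IntegrableOn H (Ioi 0 ×ˢ univ) := integrableOn_tilt_majorant hκ a b
  refine ⟨∫ p in Ioi 0 ×ˢ univ, H p, fun n hn t => ?_⟩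
  set F : ℝ × ℝ → ℝ := fun p =>
    exp (-p.1) * exp (-(a * p.1 ^ 2 / (2 * n) + b * p.1 * p.2 / √n + c * p.2 ^ 2 / 2))
  set G : ℝ × ℝ → ℝ := fun p => exp (-p.1) * exp (-c * p.2 ^ 2 / 2)
  have hF : IntegrableOn F (Ioi 0 ×ˢ Iio t) := by
    refine integrableOn_Ioi_prod_of_abs_le_exp_neg_mul_gaussian hκ (by fun_prop) (fun p => ?_) _
    rw [abs_of_pos (by positivity)]
    exact mul_le_mul_of_nonneg_left (exp_le_exp.mpr (by linarith [mul_sq_le_tilt_exponent hq hn p.1 p.2]))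
      (exp_pos _).le
  have hG : IntegrableOn G (Ioi 0 ×ˢ Iio t) := by
    refine integrableOn_Ioi_prod_of_abs_le_exp_neg_mul_gaussian hκ (by fun_prop) (fun p => ?_) _
    rw [abs_of_pos (by positivity)]
    exact mul_le_mul_of_nonneg_left (exp_le_exp.mpr (by linarith [hq 0 p.2])) (exp_pos _).le
  have hGint : ∫ y in Iio t, exp (-c * y ^ 2 / 2) = ∫ p in Ioi 0 ×ˢ Iio t, G p := by
    rw [Measure.volume_eq_prod, setIntegral_prod G hG]
    simp only [G, integral_const_mul, integral_mul_const, integral_exp_neg_Ioi_zero, one_mul]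
  have hsub : Ioi (0 : ℝ) ×ˢ Iio t ⊆ Ioi 0 ×ˢ univ := prod_mono le_rfl (subset_univ _)
  calc _ = ‖∫ p in Ioi 0 ×ˢ Iio t, (F p - G p)‖ := by
        rw [integral_sub hF hG, hGint, Real.norm_eq_abs, Measure.volume_eq_prod,
          setIntegral_prod F hF]
    _ ≤ ∫ p in Ioi 0 ×ˢ Iio t, H p / √n :=
        norm_integral_le_of_norm_le ((hH.mono_set hsub).div_const _)
          (ae_restrict_of_forall_mem (measurableSet_Ioi.prod measurableSet_Iio)
            fun p hp => abs_tilted_sub_gaussian_le hq hn hp.1.le p.2)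
    _ ≤ ∫ p in Ioi 0 ×ˢ univ, H p / √n :=
        setIntegral_mono_set (hH.div_const _)
          (ae_restrict_of_forall_mem (measurableSet_Ioi.prod .univ)
            fun p hp => by have : 0 < p.1 := hp.1; positivity)
          hsub.eventuallyLE
    _ = _ := integral_div _ _

end TiltedGaussian

theorem tilted_gaussian_uniform_in_t_asymptotics
    (Sig : Matrix (Fin 2) (Fin 2) ℝ) (hSig : Sig.PosDef) :
    ∃ C : ℝ, ∀ n : ℕ, 1 ≤ n → ∀ t : ℝ,
      |(∫ x in Set.Ioi (0 : ℝ), ∫ y in Set.Iio t,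
          Real.exp (-x) *
            Real.exp (-(Sig⁻¹ 0 0 * x ^ 2 / (2 * n) +
                Sig⁻¹ 0 1 * x * y / Real.sqrt n +
                Sig⁻¹ 1 1 * y ^ 2 / 2))) -
        ∫ y in Set.Iio t, Real.exp (-(Sig⁻¹ 1 1) * y ^ 2 / 2)| ≤
      C / Real.sqrt n := by
  have hP : (Sig⁻¹).PosDef := hSig.inv
  have h00 : 0 < Sig⁻¹ 0 0 := hP.diag_pos
  have hsymm : Sig⁻¹ 1 0 = Sig⁻¹ 0 1 := by
    simpa using (congrFun (congrFun hP.isHermitian 0) 1)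
  have hdet : 0 < Sig⁻¹ 0 0 * Sig⁻¹ 1 1 - Sig⁻¹ 0 1 ^ 2 := by
    have := hP.det_pos
    rw [Matrix.det_fin_two, hsymm] at this
    linarith
  exact exists_abs_tilted_integral_sub_gaussian_le
    (discr_mul_sq_le_quadratic _ _ h00) (by positivity)
end
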